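/- For any constant α ≥ 1 and any table φ_1, …, φ_n ∈ ℝ^d, the Finito Lyapunov value T bounds the function suboptimality at the table average: f(φ̄) − f(w*) ≤ α T. -/

import Mathlib

open scoped RealInnerProductSpace

/-- The Finito point associated with a table `φ`. -/
noncomputable def finitoW (d n : ℕ) (α μ : ℝ)
    (f' : Fin n → EuclideanSpace ℝ (Fin d) → EuclideanSpace ℝ (Fin d))
    (φ : Fin n → EuclideanSpace ℝ (Fin d)) : EuclideanSpace ℝ (Fin d) :=
  (1 / (n : ℝ)) • ∑ i, φ i - (1 / (α * μ * n)) • ∑ i, f' i (φ i)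

/-- The Finito Lyapunov value associated with a table `φ`. -/
noncomputable def finitoT (d n : ℕ) (α μ : ℝ)
    (f : Fin n → EuclideanSpace ℝ (Fin d) → ℝ)
    (f' : Fin n → EuclideanSpace ℝ (Fin d) → EuclideanSpace ℝ (Fin d))
    (φ : Fin n → EuclideanSpace ℝ (Fin d)) : ℝ :=
  (1 / (n : ℝ)) * ∑ i, f i ((1 / (n : ℝ)) • ∑ i', φ i')
    - (1 / (n : ℝ)) * ∑ i, f i (φ i)
    - (1 / (n : ℝ)) * ∑ i, ⟪f' i (φ i), finitoW d n α μ f' φ - φ i⟫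
    - (μ / (2 * n)) * ∑ i, ‖finitoW d n α μ f' φ - φ i‖ ^ 2
    + (μ / (2 * n)) * ∑ i, ‖(1 / (n : ℝ)) • ∑ i', φ i' - φ i‖ ^ 2

/-!
Write `φ̄` for the table average, `gᵢ = ∇fᵢ(φᵢ)`, `G = (1/n) ∑ gᵢ`, and `Bᵢ` for the Bregman
divergence of `fᵢ` between `φ̄` and `φᵢ`. Averaging the strong-convexity minorants of the `fᵢ`
at the points `φᵢ` gives a quadratic minorant of `f`; completing the square around `φ̄` bounds
it below, so `f(φ̄) - f(y) ≤ (1/n) ∑ Bᵢ + ‖G‖² / (2μ)` for every `y`. Expanding the squares of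
`T` around `φ̄`, with `w - φ̄ = -G / (αμ)`, gives `T = (1/n) ∑ Bᵢ + (2α - 1) / (2α²μ) ‖G‖²`;
as `Bᵢ ≥ 0` and `(2α - 1) / α ≥ 1` for `α ≥ 1`, `αT` dominates the first bound.
-/

section Centroid

variable {ι E : Type*} [Fintype ι] [NormedAddCommGroup E] [InnerProductSpace ℝ E]

theorem sum_average_sub_eq_zero (x : ι → E) :
    ∑ i, ((1 / (Fintype.card ι : ℝ)) • ∑ j, x j - x i) = 0 := by
  rcases isEmpty_or_nonempty ι with _ | _
  · simp
  · rw [Finset.sum_sub_distrib, Finset.sum_const, Finset.card_univ, ← Nat.cast_smul_eq_nsmul ℝ,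
      smul_smul, mul_one_div_cancel (by positivity), one_smul, sub_self]

theorem sum_inner_sub_eq_inner_sum_add (g x : ι → E) (c v : E) :
    ∑ i, ⟪g i, v - x i⟫ = ⟪∑ i, g i, v - c⟫ + ∑ i, ⟪g i, c - x i⟫ := by
  rw [sum_inner, ← Finset.sum_add_distrib]
  refine Finset.sum_congr rfl fun i _ => ?_
  rw [← inner_add_right, sub_add_sub_cancel]

theorem sum_norm_sub_sq_eq_of_sum_sub_eq_zero {x : ι → E} {c : E} (hc : ∑ i, (c - x i) = 0)
    (v : E) :
    ∑ i, ‖v - x i‖ ^ 2 = Fintype.card ι * ‖v - c‖ ^ 2 + ∑ i, ‖c - x i‖ ^ 2 := by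
  have h : ∀ i, ‖v - x i‖ ^ 2 = ‖v - c‖ ^ 2 + 2 * ⟪v - c, c - x i⟫ + ‖c - x i‖ ^ 2 := fun i => by
    rw [← norm_add_sq_real, sub_add_sub_cancel]
  simp only [h, Finset.sum_add_distrib, ← Finset.mul_sum, ← inner_sum, hc, inner_zero_right,
    Finset.sum_const, Finset.card_univ, nsmul_eq_mul]
  ring

end Centroid

theorem neg_norm_sq_div_le_inner_add_norm_sq {E : Type*} [NormedAddCommGroup E]
    [InnerProductSpace ℝ E] {μ : ℝ} (hμ : 0 < μ) (g y : E) :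
    -(‖g‖ ^ 2 / (2 * μ)) ≤ ⟪g, y⟫ + μ / 2 * ‖y‖ ^ 2 := by
  have h := norm_add_sq_real (μ • y) g
  rw [norm_smul, real_inner_smul_left, real_inner_comm, Real.norm_of_nonneg hμ.le] at h
  rw [neg_le_iff_add_nonneg', div_add' _ _ _ (by positivity)]
  apply div_nonneg _ (by positivity)
  nlinarith [sq_nonneg ‖μ • y + g‖]

def bregman {E : Type*} [NormedAddCommGroup E] [InnerProductSpace ℝ E] (f : E → ℝ) (f' : E → E)
    (x y : E) : ℝ :=
  f x - f y - ⟪f' y, x - y⟫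

section StronglyConvex

variable {E : Type*} [NormedAddCommGroup E] [InnerProductSpace ℝ E] {μ : ℝ}

theorem bregman_nonneg {f : E → ℝ} {f' : E → E} (hμ : 0 ≤ μ)
    (hsc : ∀ x y, f x ≥ f y + ⟪f' y, x - y⟫ + μ / 2 * ‖x - y‖ ^ 2) (x y : E) :
    0 ≤ bregman f f' x y := by
  have := hsc x y
  unfold bregman
  nlinarith [mul_nonneg hμ (sq_nonneg ‖x - y‖)]

variable {ι : Type*} [Fintype ι] [Nonempty ι] {f : ι → E → ℝ} {f' : ι → E → E}

theorem sum_sub_sum_le_sum_bregman_add (hμ : 0 < μ)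
    (hsc : ∀ i x y, f i x ≥ f i y + ⟪f' i y, x - y⟫ + μ / 2 * ‖x - y‖ ^ 2) (x : ι → E) (y : E) :
    ∑ i, f i ((1 / (Fintype.card ι : ℝ)) • ∑ j, x j) - ∑ i, f i y ≤
      ∑ i, bregman (f i) (f' i) ((1 / (Fintype.card ι : ℝ)) • ∑ j, x j) (x i) +
        ‖∑ i, f' i (x i)‖ ^ 2 / (2 * (Fintype.card ι * μ)) := by
  set c := (1 / (Fintype.card ι : ℝ)) • ∑ j, x j with hc
  have hsum := Finset.sum_le_sum fun i (_ : i ∈ Finset.univ) => hsc i y (x i)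
  rw [Finset.sum_add_distrib, Finset.sum_add_distrib, ← Finset.mul_sum,
    sum_inner_sub_eq_inner_sum_add _ _ c,
    sum_norm_sub_sq_eq_of_sum_sub_eq_zero (sum_average_sub_eq_zero x), ← hc] at hsum
  have hnμ : 0 < Fintype.card ι * μ := mul_pos (by exact_mod_cast Fintype.card_pos) hμ
  have hsq := neg_norm_sq_div_le_inner_add_norm_sq hnμ
    (∑ i, f' i (x i)) (y - c)
  have hvar : 0 ≤ μ * ∑ i, ‖c - x i‖ ^ 2 := by positivity
  simp only [bregman, Finset.sum_sub_distrib]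
  linarith

end StronglyConvex

section Finito

variable {d n : ℕ} {α μ : ℝ} {f : Fin n → EuclideanSpace ℝ (Fin d) → ℝ}
  {f' : Fin n → EuclideanSpace ℝ (Fin d) → EuclideanSpace ℝ (Fin d)}
  {φ : Fin n → EuclideanSpace ℝ (Fin d)}

theorem finitoW_sub_average :
    finitoW d n α μ f' φ - (1 / (n : ℝ)) • ∑ i, φ i =
      -((1 / (α * μ * n)) • ∑ i, f' i (φ i)) :=
  sub_sub_cancel_left _ _

theorem finitoT_eq (hn : n ≠ 0) (hα : α ≠ 0) (hμ : μ ≠ 0) :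
    finitoT d n α μ f f' φ =
      1 / n * ∑ i, bregman (f i) (f' i) ((1 / (n : ℝ)) • ∑ j, φ j) (φ i) +
        (2 * α - 1) / (2 * α ^ 2 * μ * n ^ 2) * ‖∑ i, f' i (φ i)‖ ^ 2 := by
  have hc := sum_average_sub_eq_zero φ
  rw [Fintype.card_fin] at hc
  rw [finitoT, sum_inner_sub_eq_inner_sum_add _ _ ((1 / (n : ℝ)) • ∑ j, φ j),
    sum_norm_sub_sq_eq_of_sum_sub_eq_zero hc, Fintype.card_fin, finitoW_sub_average,
    inner_neg_right, real_inner_smul_right, real_inner_self_eq_norm_sq, norm_neg, norm_smul,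
    Real.norm_eq_abs, mul_pow, sq_abs]
  simp only [bregman, Finset.sum_sub_distrib]
  field_simp
  ring

end Finito

theorem finito_lyapunov_bounds_suboptimality_general (d n : ℕ) (hn : 1 ≤ n) (μ α : ℝ)
    (hμ : 0 < μ) (hα : 1 ≤ α)
    (f : Fin n → EuclideanSpace ℝ (Fin d) → ℝ)
    (f' : Fin n → EuclideanSpace ℝ (Fin d) → EuclideanSpace ℝ (Fin d))
    (hsc : ∀ i x y, f i x ≥ f i y + ⟪f' i y, x - y⟫ + μ / 2 * ‖x - y‖ ^ 2)
    (wstar : EuclideanSpace ℝ (Fin d))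
    (φ : Fin n → EuclideanSpace ℝ (Fin d)) :
    (1 / (n : ℝ)) * ∑ i, f i ((1 / (n : ℝ)) • ∑ i', φ i')
        - (1 / (n : ℝ)) * ∑ i, f i wstar
      ≤ α * finitoT d n α μ f f' φ := by
  have : Nonempty (Fin n) := ⟨⟨0, hn⟩⟩
  have hn0 : (0 : ℝ) < n := by exact_mod_cast hn
  have hsub := sum_sub_sum_le_sum_bregman_add hμ hsc φ wstar
  rw [Fintype.card_fin] at hsub
  set D := ∑ i, bregman (f i) (f' i) ((1 / (n : ℝ)) • ∑ j, φ j) (φ i)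
  set N := ‖∑ i, f' i (φ i)‖ ^ 2
  have hD : 0 ≤ D := Finset.sum_nonneg fun i _ => bregman_nonneg hμ.le (hsc i) _ _
  have hslack : α * finitoT d n α μ f f' φ - 1 / n * (D + N / (2 * (n * μ))) =
      (α - 1) * (D / n + N / (2 * α * μ * n ^ 2)) := by
    rw [finitoT_eq (by omega) (by positivity) hμ.ne']
    field_simp
    ring
  calc 1 / (n : ℝ) * ∑ i, f i ((1 / (n : ℝ)) • ∑ i', φ i') - 1 / n * ∑ i, f i wstar
      ≤ 1 / n * (D + N / (2 * (n * μ))) := by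
        rw [← mul_sub]
        gcongr
    _ ≤ α * finitoT d n α μ f f' φ := by
        have : 0 ≤ (α - 1) * (D / n + N / (2 * α * μ * n ^ 2)) :=
          mul_nonneg (by linarith) (by positivity)
        linarith

theorem finito_lyapunov_bounds_suboptimality (d n : ℕ) (hn : 1 ≤ n) (μ L α : ℝ)
    (hμ : 0 < μ) (hμL : μ ≤ L) (hα : 1 ≤ α)
    (f : Fin n → EuclideanSpace ℝ (Fin d) → ℝ)
    (f' : Fin n → EuclideanSpace ℝ (Fin d) → EuclideanSpace ℝ (Fin d))
    (hgrad : ∀ i x, HasGradientAt (f i) (f' i x) x)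
    (hsmooth : ∀ i x y, ‖f' i x - f' i y‖ ≤ L * ‖x - y‖)
    (hsc : ∀ i x y, f i x ≥ f i y + ⟪f' i y, x - y⟫ + μ / 2 * ‖x - y‖ ^ 2)
    (wstar : EuclideanSpace ℝ (Fin d))
    (hstar : ∀ x, (1 / (n : ℝ)) * ∑ i, f i wstar ≤ (1 / (n : ℝ)) * ∑ i, f i x)
    (φ : Fin n → EuclideanSpace ℝ (Fin d)) :
    (1 / (n : ℝ)) * ∑ i, f i ((1 / (n : ℝ)) • ∑ i', φ i')
        - (1 / (n : ℝ)) * ∑ i, f i wstar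
      ≤ α * finitoT d n α μ f f' φ :=
  finito_lyapunov_bounds_suboptimality_general d n hn μ α hμ hα f f' hsc wstar φ
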